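/- Let q be an odd prime power, n coprime to q, v = ν_2(n), n = 2^v·n' with n' odd, and let s ∈ (Z/nZ)^*, t with qt ≡ t (mod n). Then a Type-I duadic splitting of Z/nZ given by ρ_{s,t} exists if and only if a Type-I duadic splitting of Z/2^vZ given by ρ_{s,t} (with s,t reduced mod 2^v) exists. -/
import Mathlib

open Function Finset

section abstract
variable {α : Type*} [Fintype α] [DecidableEq α]

lemma exists_global_period {f : α → α} (hf : f.Bijective) :
    ∃ D, 0 < D ∧ ∀ x, f^[D] x = x := by
  let F := Equiv.ofBijective f hf
  have h2 : ∀ (k : ℕ) (x), f^[k] x = (F ^ k) x := by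
    intro k
    induction k with
    | zero => simp
    | succ k ih =>
        intro x
        rw [Function.iterate_succ_apply, pow_succ, Equiv.Perm.mul_apply, ih]
        rfl
  refine ⟨orderOf F, orderOf_pos F, fun x => ?_⟩
  rw [h2, pow_orderOf_eq_one F]
  rfl

theorem splitting_iff_no_odd_cycle (f g : α → α) (hf : f.Bijective) (hg : g.Bijective)
    (hc : ∀ x, f (g x) = g (f x)) :
    (∃ P : Finset α, P.image g = P ∧ P.image f = Pᶜ) ↔
      ¬ ∃ (x : α) (m i : ℕ), Odd m ∧ f^[m] x = g^[i] x := by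
  classical
  have hcgi : ∀ (i : ℕ) (x), f (g^[i] x) = g^[i] (f x) := by
    intro i
    induction i with
    | zero => simp
    | succ i ih => intro x; rw [Function.iterate_succ_apply', hc, ih]; exact (Function.iterate_succ_apply' g i (f x)).symm
  constructor
  · rintro ⟨P, hPg, hPf⟩ ⟨x, m, i, hm, hx⟩
    have memg : ∀ y, g y ∈ P ↔ y ∈ P := by
      intro y
      constructor
      · intro h
        rw [← hPg] at h
        obtain ⟨z, hz, hzy⟩ := Finset.mem_image.mp h
        rwa [← hg.injective hzy]
      · intro h
        rw [← hPg]
        exact Finset.mem_image_of_mem g h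
    have memgi : ∀ (j : ℕ) (y), g^[j] y ∈ P ↔ y ∈ P := by
      intro j
      induction j with
      | zero => simp
      | succ j ih => intro y; rw [Function.iterate_succ_apply', memg, ih]
    have memf : ∀ y, f y ∈ P ↔ y ∉ P := by
      intro y
      constructor
      · intro h h'
        have : f y ∈ Pᶜ := by rw [← hPf]; exact Finset.mem_image_of_mem f h'
        exact (Finset.mem_compl.mp this) h
      · intro h
        by_contra h'
        have : f y ∈ Pᶜ := Finset.mem_compl.mpr h'
        rw [← hPf] at this
        obtain ⟨z, hz, hzy⟩ := Finset.mem_image.mp this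
        rw [← hf.injective hzy] at h
        exact h hz
    have memfi : ∀ (j : ℕ) (y), Odd j → (f^[j] y ∈ P ↔ y ∉ P) := by
      have main : ∀ j : ℕ, ∀ y, (Even j → (f^[j] y ∈ P ↔ y ∈ P)) ∧
          (Odd j → (f^[j] y ∈ P ↔ y ∉ P)) := by
        intro j
        induction j with
        | zero => simp
        | succ j ih =>
            intro y
            constructor
            · intro hev
              have hodd : Odd j := by rw [Nat.even_iff] at hev; rw [Nat.odd_iff]; omega
              rw [Function.iterate_succ_apply, (ih (f y)).2 hodd, memf]
              tauto
            · intro hod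
              have hev : Even j := by rw [Nat.odd_iff] at hod; rw [Nat.even_iff]; omega
              rw [Function.iterate_succ_apply, (ih (f y)).1 hev, memf]
      exact fun j y => (main j y).2
    have h1 : f^[m] x ∈ P ↔ x ∉ P := memfi m x hm
    rw [hx, memgi] at h1
    tauto
  · intro hno
    obtain ⟨D, hD, hDf⟩ := exists_global_period hf
    obtain ⟨E, hE, hEg⟩ := exists_global_period hg
    -- main induction
    have key : ∀ (N : ℕ) (T : Finset α), T.card ≤ N → (∀ x, x ∈ T ↔ f x ∈ T) →
        (∀ x, x ∈ T ↔ g x ∈ T) →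
        ∃ P, P ⊆ T ∧ P.image g = P ∧ P.image f = T \ P := by
      intro N
      induction N with
      | zero =>
          intro T hT _ _
          have : T = ∅ := Finset.card_eq_zero.mp (Nat.le_zero.mp hT)
          subst this
          exact ⟨∅, by simp⟩
      | succ N ih =>
          intro T hT hTf hTg
          rcases Finset.eq_empty_or_nonempty T with rfl | ⟨x, hx⟩
          · exact ⟨∅, by simp⟩
          -- closure iterates
          have hTfi : ∀ (k : ℕ) (z), z ∈ T → f^[k] z ∈ T := by
            intro k
            induction k with
            | zero => simp
            | succ k ihk => intro z hz; rw [Function.iterate_succ_apply']; exact (hTf _).mp (ihk z hz)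
          have hTgi : ∀ (k : ℕ) (z), z ∈ T → g^[k] z ∈ T := by
            intro k
            induction k with
            | zero => simp
            | succ k ihk => intro z hz; rw [Function.iterate_succ_apply']; exact (hTg _).mp (ihk z hz)
          -- D is even
          have hDeven : Even D := by
            rcases Nat.even_or_odd D with h | h
            · exact h
            · exact absurd ⟨x, D, 0, h, by rw [hDf]; rfl⟩ hno
          set A : Finset α := univ.filter (fun y => ∃ k i : ℕ, Even k ∧ g^[i] (f^[k] x) = y) with hA
          set B : Finset α := univ.filter (fun y => ∃ k i : ℕ, Odd k ∧ g^[i] (f^[k] x) = y) with hB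
          have memA : ∀ y, y ∈ A ↔ ∃ k i : ℕ, Even k ∧ g^[i] (f^[k] x) = y := by
            intro y; simp [hA]
          have memB : ∀ y, y ∈ B ↔ ∃ k i : ℕ, Odd k ∧ g^[i] (f^[k] x) = y := by
            intro y; simp [hB]
          -- g-cancellation
          have gcancel : ∀ (i : ℕ) (a b : α), g^[i] a = b → a = g^[i * (E - 1)] b := by
            intro i a b h
            have : g^[i * (E - 1)] (g^[i] a) = a := by
              rw [← Function.iterate_add_apply]
              obtain ⟨E', rfl⟩ : ∃ E', E = E' + 1 := ⟨E - 1, by omega⟩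
              have he : i * (E' + 1 - 1) + i = (E' + 1) * i := by simp; ring
              rw [he, Function.iterate_mul]
              exact Function.iterate_fixed (hEg a) i
            rw [h] at this
            exact this.symm
          -- parity well-definedness
          have parity : ∀ (k k' i i' : ℕ), g^[i] (f^[k] x) = g^[i'] (f^[k'] x) →
              (Even k ↔ Even k') := by
            have half : ∀ (k k' i i' : ℕ), k ≤ k' → g^[i] (f^[k] x) = g^[i'] (f^[k'] x) →
                (Even k ↔ Even k') := by
              intro k k' i i' hkk h
              have h1 : f^[k] x = g^[i * (E-1) + i'] (f^[k'] x) := by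
                have := gcancel i _ _ h
                rwa [← Function.iterate_add_apply] at this
              -- f^[k'] x = f^[k' - k] (f^[k] x)
              have h2 : f^[k'] x = f^[k' - k] (f^[k] x) := by
                rw [← Function.iterate_add_apply]
                congr 1
                omega
              -- so g^[j] fixes-ish : f^[k'-k] (f^[k] x) = g^[j'] (f^[k] x) for some j'
              have h3 : g^[(i * (E-1) + i') * (E - 1)] (f^[k] x) = f^[k' - k] (f^[k] x) := by
                have := gcancel (i * (E-1) + i') _ _ h1.symm
                rw [← h2, ← this]
              by_contra hne
              have hodd : Odd (k' - k) := by
                simp only [Nat.even_iff] at hne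
                rw [Nat.odd_iff]; omega
              exact hno ⟨f^[k] x, k' - k, (i * (E-1) + i') * (E - 1), hodd, h3.symm⟩
            intro k k' i i' h
            rcases le_total k k' with hle | hle
            · exact half k k' i i' hle h
            · exact (half k' k i' i hle h.symm).symm
          have hABdisj : ∀ y, y ∈ A → y ∈ B → False := by
            intro y hyA hyB
            obtain ⟨k, i, hk, hky⟩ := (memA y).mp hyA
            obtain ⟨k', i', hk', hky'⟩ := (memB y).mp hyB
            have := parity k k' i i' (by rw [hky, hky'])
            rw [Nat.odd_iff] at hk'
            rw [Nat.even_iff] at hk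
            have := this.mp (Nat.even_iff.mpr hk)
            rw [Nat.even_iff] at this
            omega
          have hfAB : ∀ y, y ∈ A → f y ∈ B := by
            intro y hy
            obtain ⟨k, i, hk, rfl⟩ := (memA y).mp hy
            refine (memB _).mpr ⟨k+1, i, ?_, ?_⟩
            · rw [Nat.even_iff] at hk; rw [Nat.odd_iff]; omega
            · rw [hcgi i (f^[k] x)]
              rw [← Function.iterate_succ_apply' f k x]
          have hfBA : ∀ y, y ∈ B → f y ∈ A := by
            intro y hy
            obtain ⟨k, i, hk, rfl⟩ := (memB y).mp hy
            refine (memA _).mpr ⟨k+1, i, ?_, ?_⟩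
            · rw [Nat.odd_iff] at hk; rw [Nat.even_iff]; omega
            · rw [hcgi i (f^[k] x)]
              rw [← Function.iterate_succ_apply' f k x]
          have hBfA : ∀ y, y ∈ B → ∃ z, z ∈ A ∧ f z = y := by
            intro y hy
            obtain ⟨k, i, hk, rfl⟩ := (memB y).mp hy
            have hk1 : 1 ≤ k := by rw [Nat.odd_iff] at hk; omega
            refine ⟨g^[i] (f^[k-1] x), (memA _).mpr ⟨k-1, i, ?_, rfl⟩, ?_⟩
            · rw [Nat.odd_iff] at hk; rw [Nat.even_iff]; omega
            · rw [hcgi i (f^[k-1] x), ← Function.iterate_succ_apply' f (k-1) x]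
              congr 2
              omega
          have hAfB : ∀ y, y ∈ A → ∃ z, z ∈ B ∧ f z = y := by
            intro y hy
            obtain ⟨k, i, hk, rfl⟩ := (memA y).mp hy
            refine ⟨g^[i] (f^[k+D-1] x), (memB _).mpr ⟨k+D-1, i, ?_, rfl⟩, ?_⟩
            · rw [Nat.even_iff] at hk
              obtain ⟨d, hd⟩ := hDeven
              rw [Nat.odd_iff]; omega
            · have hkD : k + D - 1 + 1 = k + D := by omega
              calc f (g^[i] (f^[k + D - 1] x))
                  = g^[i] (f (f^[k + D - 1] x)) := hcgi i (f^[k+D-1] x)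
                _ = g^[i] (f^[k + D - 1 + 1] x) := by rw [Function.iterate_succ_apply' f (k+D-1) x]
                _ = g^[i] (f^[k + D] x) := by rw [hkD]
                _ = g^[i] (f^[k] (f^[D] x)) := by rw [Function.iterate_add_apply]
                _ = g^[i] (f^[k] x) := by rw [hDf]
          have hgAA : ∀ y, y ∈ A → g y ∈ A := by
            intro y hy
            obtain ⟨k, i, hk, rfl⟩ := (memA y).mp hy
            exact (memA _).mpr ⟨k, i+1, hk, Function.iterate_succ_apply' g i (f^[k] x)⟩
          have hgBB : ∀ y, y ∈ B → g y ∈ B := by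
            intro y hy
            obtain ⟨k, i, hk, rfl⟩ := (memB y).mp hy
            exact (memB _).mpr ⟨k, i+1, hk, Function.iterate_succ_apply' g i (f^[k] x)⟩
          have hgpre : ∀ (k i : ℕ), g (g^[i + E - 1] (f^[k] x)) = g^[i] (f^[k] x) := by
            intro k i
            have h1 : i + E - 1 + 1 = i + E := by omega
            calc g (g^[i + E - 1] (f^[k] x))
                = g^[i + E - 1 + 1] (f^[k] x) := (Function.iterate_succ_apply' g (i+E-1) (f^[k] x)).symm
              _ = g^[i + E] (f^[k] x) := by rw [h1]
              _ = g^[i] (g^[E] (f^[k] x)) := Function.iterate_add_apply g i E (f^[k] x)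
              _ = g^[i] (f^[k] x) := by rw [hEg]
          have hAgA : ∀ y, y ∈ A → ∃ z, z ∈ A ∧ g z = y := by
            intro y hy
            obtain ⟨k, i, hk, rfl⟩ := (memA y).mp hy
            exact ⟨g^[i + E - 1] (f^[k] x), (memA _).mpr ⟨k, i + E - 1, hk, rfl⟩, hgpre k i⟩
          have hBgB : ∀ y, y ∈ B → ∃ z, z ∈ B ∧ g z = y := by
            intro y hy
            obtain ⟨k, i, hk, rfl⟩ := (memB y).mp hy
            exact ⟨g^[i + E - 1] (f^[k] x), (memB _).mpr ⟨k, i + E - 1, hk, rfl⟩, hgpre k i⟩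
          have hfA : A.image f = B := by
            ext y
            constructor
            · intro hy
              obtain ⟨z, hz, rfl⟩ := Finset.mem_image.mp hy
              exact hfAB z hz
            · intro hy
              obtain ⟨z, hz, hzy⟩ := hBfA y hy
              exact Finset.mem_image.mpr ⟨z, hz, hzy⟩
          have hfB : B.image f = A := by
            ext y
            constructor
            · intro hy
              obtain ⟨z, hz, rfl⟩ := Finset.mem_image.mp hy
              exact hfBA z hz
            · intro hy
              obtain ⟨z, hz, hzy⟩ := hAfB y hy
              exact Finset.mem_image.mpr ⟨z, hz, hzy⟩
          have hgA : A.image g = A := by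
            ext y
            constructor
            · intro hy
              obtain ⟨z, hz, rfl⟩ := Finset.mem_image.mp hy
              exact hgAA z hz
            · intro hy
              obtain ⟨z, hz, hzy⟩ := hAgA y hy
              exact Finset.mem_image.mpr ⟨z, hz, hzy⟩
          have hCsub : ∀ y, y ∈ A ∪ B → y ∈ T := by
            intro y hy
            rcases Finset.mem_union.mp hy with h | h
            · obtain ⟨k, i, hk, rfl⟩ := (memA y).mp h
              exact hTgi i _ (hTfi k x hx)
            · obtain ⟨k, i, hk, rfl⟩ := (memB y).mp h
              exact hTgi i _ (hTfi k x hx)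
          have hfC : ∀ z, z ∈ A ∪ B ↔ f z ∈ A ∪ B := by
            intro z
            constructor
            · intro hz
              rcases Finset.mem_union.mp hz with h | h
              · exact Finset.mem_union.mpr (Or.inr (hfAB z h))
              · exact Finset.mem_union.mpr (Or.inl (hfBA z h))
            · intro hz
              rcases Finset.mem_union.mp hz with h | h
              · obtain ⟨w, hw, hwz⟩ := hAfB _ h
                rw [← hf.injective hwz]
                exact Finset.mem_union.mpr (Or.inr hw)
              · obtain ⟨w, hw, hwz⟩ := hBfA _ h
                rw [← hf.injective hwz]
                exact Finset.mem_union.mpr (Or.inl hw)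
          have hgC : ∀ z, z ∈ A ∪ B ↔ g z ∈ A ∪ B := by
            intro z
            constructor
            · intro hz
              rcases Finset.mem_union.mp hz with h | h
              · exact Finset.mem_union.mpr (Or.inl (hgAA z h))
              · exact Finset.mem_union.mpr (Or.inr (hgBB z h))
            · intro hz
              rcases Finset.mem_union.mp hz with h | h
              · obtain ⟨w, hw, hwz⟩ := hAgA _ h
                rw [← hg.injective hwz]
                exact Finset.mem_union.mpr (Or.inl hw)
              · obtain ⟨w, hw, hwz⟩ := hBgB _ h
                rw [← hg.injective hwz]
                exact Finset.mem_union.mpr (Or.inr hw)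
          set T' : Finset α := T \ (A ∪ B) with hT'
          have hxA : x ∈ A := (memA x).mpr ⟨0, 0, Even.zero, rfl⟩
          have hcard : T'.card ≤ N := by
            have hsub : T' ⊆ T := Finset.sdiff_subset
            have hlt : T'.card < T.card := by
              refine Finset.card_lt_card ⟨hsub, fun hTT => ?_⟩
              have := hTT hx
              rw [hT', Finset.mem_sdiff] at this
              exact this.2 (Finset.mem_union.mpr (Or.inl hxA))
            omega
          have hT'f : ∀ z, z ∈ T' ↔ f z ∈ T' := by
            intro z
            rw [hT', Finset.mem_sdiff, Finset.mem_sdiff, ← hTf, ← hfC]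
          have hT'g : ∀ z, z ∈ T' ↔ g z ∈ T' := by
            intro z
            rw [hT', Finset.mem_sdiff, Finset.mem_sdiff, ← hTg, ← hgC]
          obtain ⟨P', hP'T, hP'g, hP'f⟩ := ih T' hcard hT'f hT'g
          refine ⟨P' ∪ A, ?_, ?_, ?_⟩
          · intro y hy
            rcases Finset.mem_union.mp hy with h | h
            · exact (Finset.mem_sdiff.mp (hP'T h)).1
            · exact hCsub y (Finset.mem_union.mpr (Or.inl h))
          · rw [Finset.image_union, hP'g, hgA]
          · rw [Finset.image_union, hP'f, hfA]
            ext y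
            simp only [Finset.mem_union, Finset.mem_sdiff]
            constructor
            · rintro (⟨hyT', hyP'⟩ | hyB)
              · rw [hT', Finset.mem_sdiff] at hyT'
                refine ⟨hyT'.1, ?_⟩
                rintro (h | h)
                · exact hyP' h
                · exact hyT'.2 (Finset.mem_union.mpr (Or.inl h))
              · refine ⟨hCsub y (Finset.mem_union.mpr (Or.inr hyB)), ?_⟩
                rintro (h | h)
                · have := hP'T h
                  rw [hT', Finset.mem_sdiff] at this
                  exact this.2 (Finset.mem_union.mpr (Or.inr hyB))
                · exact hABdisj y h hyB
            · rintro ⟨hyT, hyn⟩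
              by_cases hyC : y ∈ A ∪ B
              · rcases Finset.mem_union.mp hyC with h | h
                · exact absurd h (fun h => hyn (Or.inr h))
                · exact Or.inr h
              · refine Or.inl ⟨?_, fun h => hyn (Or.inl h)⟩
                rw [hT', Finset.mem_sdiff]
                exact ⟨hyT, hyC⟩
    obtain ⟨P, _, hPg, hPf⟩ := key (Fintype.card α) Finset.univ
      (by rw [Finset.card_univ]) (by simp) (by simp)
    refine ⟨P, hPg, ?_⟩
    rw [hPf, Finset.compl_eq_univ_sdiff]
end abstract

section odd
variable {β : Type*} [Fintype β] [DecidableEq β]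

lemma exists_global_period' {f : β → β} (hf : f.Bijective) :
    ∃ D, 0 < D ∧ ∀ x, f^[D] x = x := by
  let F := Equiv.ofBijective f hf
  have h2 : ∀ (k : ℕ) (x), f^[k] x = (F ^ k) x := by
    intro k
    induction k with
    | zero => simp
    | succ k ih =>
        intro x
        rw [Function.iterate_succ_apply, pow_succ, Equiv.Perm.mul_apply, ih]
        rfl
  refine ⟨orderOf F, orderOf_pos F, fun x => ?_⟩
  rw [h2, pow_orderOf_eq_one F]
  rfl

lemma exists_odd_period (hcard : Odd (Fintype.card β))
    {f : β → β} (hf : Function.Bijective f) : ∃ y m, Odd m ∧ f^[m] y = y := by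
  by_contra hcon
  push_neg at hcon
  obtain ⟨D, hD, hDf⟩ := exists_global_period' hf
  have hmem : ∀ y, y ∈ Function.periodicPts f := fun y => ⟨D, hD, hDf y⟩
  have hppos : ∀ y, 0 < Function.minimalPeriod f y := fun y =>
    Function.minimalPeriod_pos_of_mem_periodicPts (hmem y)
  have heven : ∀ y, Even (Function.minimalPeriod f y) := by
    intro y
    rcases Nat.even_or_odd (Function.minimalPeriod f y) with h | h
    · exact h
    · exact absurd Function.iterate_minimalPeriod (hcon y _ h)
  let ι : Function.End β := fun y => f^[Function.minimalPeriod f y / 2] y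
  have hhalf : ∀ y, Function.minimalPeriod f y / 2 + Function.minimalPeriod f y / 2
      = Function.minimalPeriod f y := by
    intro y
    obtain ⟨c, hc⟩ := heven y
    omega
  have hii : ∀ y, ι (ι y) = y := by
    intro y
    have h1 : Function.minimalPeriod f (ι y) = Function.minimalPeriod f y :=
      Function.minimalPeriod_apply_iterate (hmem y) _
    show f^[Function.minimalPeriod f (f^[Function.minimalPeriod f y / 2] y) / 2]
        (f^[Function.minimalPeriod f y / 2] y) = y
    have h1' : Function.minimalPeriod f (f^[Function.minimalPeriod f y / 2] y)
        = Function.minimalPeriod f y := Function.minimalPeriod_apply_iterate (hmem y) _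
    rw [h1', ← Function.iterate_add_apply, hhalf]
    exact Function.iterate_minimalPeriod
  have hsq : ι ^ (2:ℕ) ^ (1:ℕ) = 1 := by
    have h2 : (2:ℕ) ^ (1:ℕ) = 2 := by norm_num
    rw [h2, sq]
    funext y
    exact hii y
  haveI : Fact (Nat.Prime 2) := ⟨Nat.prime_two⟩
  have hmod := Equiv.Perm.card_fixedPoints_modEq (p := 2) (n := 1) hsq
  have hempty : Fintype.card (Function.fixedPoints ι) = 0 := by
    rw [Fintype.card_eq_zero_iff]
    constructor
    rintro ⟨y, hy⟩
    have hy' : f^[Function.minimalPeriod f y / 2] y = y := hy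
    have h3 : Function.minimalPeriod f y / 2 ≠ 0 := by
      obtain ⟨c, hc⟩ := heven y
      have := hppos y
      omega
    have h4 : Function.minimalPeriod f y / 2 < Function.minimalPeriod f y :=
      Nat.div_lt_self (hppos y) one_lt_two
    exact Function.not_isPeriodicPt_of_pos_of_lt_minimalPeriod h3 h4 hy'
  rw [hempty] at hmod
  have : (2:ℕ) ∣ Fintype.card β := (Nat.modEq_zero_iff_dvd).mp hmod
  rw [Nat.odd_iff] at hcard
  omega

end odd

section helpers
variable {R S : Type*} [CommRing R] [CommRing S]

lemma affine_bijective [Finite R] {a : R} (c : R) (ha : IsUnit a) :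
    Function.Bijective (fun z : R => a * (z + c)) := by
  have hinj : Function.Injective (fun z : R => a * (z + c)) := by
    intro u w h
    simp only at h
    exact add_right_cancel (ha.mul_left_cancel h)
  exact Finite.injective_iff_bijective.mp hinj

lemma mul_bijective [Finite R] {a : R} (ha : IsUnit a) :
    Function.Bijective (fun z : R => a * z) := by
  have hinj : Function.Injective (fun z : R => a * z) := fun u w h => ha.mul_left_cancel h
  exact Finite.injective_iff_bijective.mp hinj

lemma iter_affine_map (φ : R →+* S) (s t : ℤ) (k : ℕ) (z : R) :
    φ ((fun i : R => (s : R) * (i + (t : R)))^[k] z)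
      = (fun i : S => (s : S) * (i + (t : S)))^[k] (φ z) := by
  induction k with
  | zero => simp
  | succ k ih =>
      rw [Function.iterate_succ_apply', Function.iterate_succ_apply', ← ih]
      simp [map_mul, map_add]

lemma iter_mul_map (φ : R →+* S) (q : ℕ) (k : ℕ) (z : R) :
    φ ((fun i : R => (q : R) * i)^[k] z) = (fun i : S => (q : S) * i)^[k] (φ z) := by
  induction k with
  | zero => simp
  | succ k ih =>
      rw [Function.iterate_succ_apply', Function.iterate_succ_apply', ← ih, map_mul, map_natCast]

end helpers

set_option maxHeartbeats 1000000 in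
/-- for `q` an odd prime power, `n = 2^v·n'` with `n'` odd and `n` coprime
to `q`, and `s ∈ (ℤ/nℤ)^*`, `t` with `q·t ≡ t (mod n)`: a Type-I duadic splitting of
`ℤ/nℤ` given by `ρ_{s,t}` exists iff a Type-I duadic splitting of `ℤ/2^vℤ` given by
`ρ_{s,t}` (with `s, t` reduced mod `2^v`) exists. -/
theorem stmt17 (q : ℕ) (hq : ∃ p k : ℕ, p.Prime ∧ 0 < k ∧ q = p ^ k) (hodd : Odd q)
    (n v n' : ℕ) (hn : n = 2 ^ v * n') (hn' : Odd n') (hn0 : 0 < n)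
    (hcop : Nat.Coprime q n) [NeZero n]
    (s t : ℤ) (hs : IsUnit (s : ZMod n)) (hqt : (q : ℤ) * t ≡ t [ZMOD n]) :
    (∃ P : Finset (ZMod n),
        P.image (fun i => (q : ZMod n) * i) = P ∧
        P.image (fun i => (s : ZMod n) * (i + (t : ZMod n))) = Pᶜ) ↔
    (∃ P : Finset (ZMod (2 ^ v)),
        P.image (fun i => (q : ZMod (2 ^ v)) * i) = P ∧
        P.image (fun i => (s : ZMod (2 ^ v)) * (i + (t : ZMod (2 ^ v)))) = Pᶜ) := by
  subst hn
  haveI h2v : NeZero (2 ^ v) := ⟨pow_ne_zero v two_ne_zero⟩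
  haveI hn'nz : NeZero n' := ⟨by rcases hn' with ⟨k, hk⟩; omega⟩
  have hqun : IsUnit ((q : ℕ) : ZMod (2 ^ v * n')) := (ZMod.isUnit_iff_coprime q _).mpr hcop
  have hcop2 : Nat.Coprime q (2 ^ v) := Nat.Coprime.pow_right v hodd.coprime_two_right
  have hqu2 : IsUnit ((q : ℕ) : ZMod (2 ^ v)) := (ZMod.isUnit_iff_coprime q _).mpr hcop2
  have hcopn' : Nat.Coprime q n' := Nat.Coprime.coprime_dvd_right (dvd_mul_left n' (2 ^ v)) hcop
  have hqun' : IsUnit ((q : ℕ) : ZMod n') := (ZMod.isUnit_iff_coprime q _).mpr hcopn'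
  have hsu2 : IsUnit ((s : ZMod (2 ^ v))) := by
    have h := hs.map (ZMod.castHom (dvd_mul_right (2 ^ v) n') (ZMod (2 ^ v)))
    rwa [map_intCast] at h
  have hsun' : IsUnit ((s : ZMod n')) := by
    have h := hs.map (ZMod.castHom (dvd_mul_left n' (2 ^ v)) (ZMod n'))
    rwa [map_intCast] at h
  have htn : ((q : ℕ) : ZMod (2 ^ v * n')) * (t : ZMod (2 ^ v * n')) = (t : ZMod (2 ^ v * n')) := by
    have h := (ZMod.intCast_eq_intCast_iff _ _ _).mpr hqt
    push_cast at h
    exact h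
  have ht2 : ((q : ℕ) : ZMod (2 ^ v)) * (t : ZMod (2 ^ v)) = (t : ZMod (2 ^ v)) := by
    have h := congrArg (ZMod.castHom (dvd_mul_right (2 ^ v) n') (ZMod (2 ^ v))) htn
    rwa [map_mul, map_natCast, map_intCast] at h
  have htn' : ((q : ℕ) : ZMod n') * (t : ZMod n') = (t : ZMod n') := by
    have h := congrArg (ZMod.castHom (dvd_mul_left n' (2 ^ v)) (ZMod n')) htn
    rwa [map_mul, map_natCast, map_intCast] at h
  have hcommn : ∀ x : ZMod (2 ^ v * n'),
      (fun i : ZMod (2 ^ v * n') => (s : ZMod (2 ^ v * n')) * (i + (t : ZMod (2 ^ v * n'))))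
        ((fun i : ZMod (2 ^ v * n') => ((q : ℕ) : ZMod (2 ^ v * n')) * i) x)
      = (fun i : ZMod (2 ^ v * n') => ((q : ℕ) : ZMod (2 ^ v * n')) * i)
        ((fun i : ZMod (2 ^ v * n') => (s : ZMod (2 ^ v * n')) * (i + (t : ZMod (2 ^ v * n')))) x) := by
    intro x
    show (s : ZMod (2 ^ v * n')) * (((q : ℕ) : ZMod (2 ^ v * n')) * x + (t : ZMod (2 ^ v * n')))
      = ((q : ℕ) : ZMod (2 ^ v * n')) * ((s : ZMod (2 ^ v * n')) * (x + (t : ZMod (2 ^ v * n'))))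
    conv_lhs => rw [← htn]
    ring
  have hcomm2 : ∀ x : ZMod (2 ^ v),
      (fun i : ZMod (2 ^ v) => (s : ZMod (2 ^ v)) * (i + (t : ZMod (2 ^ v))))
        ((fun i : ZMod (2 ^ v) => ((q : ℕ) : ZMod (2 ^ v)) * i) x)
      = (fun i : ZMod (2 ^ v) => ((q : ℕ) : ZMod (2 ^ v)) * i)
        ((fun i : ZMod (2 ^ v) => (s : ZMod (2 ^ v)) * (i + (t : ZMod (2 ^ v)))) x) := by
    intro x
    show (s : ZMod (2 ^ v)) * (((q : ℕ) : ZMod (2 ^ v)) * x + (t : ZMod (2 ^ v)))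
      = ((q : ℕ) : ZMod (2 ^ v)) * ((s : ZMod (2 ^ v)) * (x + (t : ZMod (2 ^ v))))
    conv_lhs => rw [← ht2]
    ring
  rw [splitting_iff_no_odd_cycle
      (fun i : ZMod (2 ^ v * n') => (s : ZMod (2 ^ v * n')) * (i + (t : ZMod (2 ^ v * n'))))
      (fun i : ZMod (2 ^ v * n') => ((q : ℕ) : ZMod (2 ^ v * n')) * i)
      (affine_bijective _ hs) (mul_bijective hqun) hcommn,
    splitting_iff_no_odd_cycle
      (fun i : ZMod (2 ^ v) => (s : ZMod (2 ^ v)) * (i + (t : ZMod (2 ^ v))))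
      (fun i : ZMod (2 ^ v) => ((q : ℕ) : ZMod (2 ^ v)) * i)
      (affine_bijective _ hsu2) (mul_bijective hqu2) hcomm2]
  constructor
  · -- no odd cycle mod n → no odd cycle mod 2^v : lift odd cycle up via CRT
    intro hnon
    rintro ⟨x₀, m, i, hm, hx⟩
    -- mod 2^v: convert to power form
    have hx' : (fun i : ZMod (2 ^ v) => (s : ZMod (2 ^ v)) * (i + (t : ZMod (2 ^ v))))^[m] x₀
        = ((q : ℕ) : ZMod (2 ^ v)) ^ i * x₀ := by
      rw [hx]
      exact congrFun (mul_left_iterate ((q : ℕ) : ZMod (2 ^ v)) i) x₀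
    -- find odd sigma-period point in the q-fixed subgroup of ZMod n'
    have hσbij : Function.Bijective
        (fun z : ZMod n' => (s : ZMod n') * (z + (t : ZMod n'))) := affine_bijective _ hsun'
    have hσH : ∀ y : {y : ZMod n' // ((q : ℕ) : ZMod n') * y = y},
        ((q : ℕ) : ZMod n') * ((s : ZMod n') * (y.1 + (t : ZMod n')))
          = (s : ZMod n') * (y.1 + (t : ZMod n')) := by
      intro y
      have hy := y.2
      calc ((q : ℕ) : ZMod n') * ((s : ZMod n') * (y.1 + (t : ZMod n')))
          = (s : ZMod n') * (((q : ℕ) : ZMod n') * y.1 + ((q : ℕ) : ZMod n') * (t : ZMod n')) := by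
            ring
        _ = (s : ZMod n') * (y.1 + (t : ZMod n')) := by rw [hy, htn']
    set ςf : {y : ZMod n' // ((q : ℕ) : ZMod n') * y = y} →
        {y : ZMod n' // ((q : ℕ) : ZMod n') * y = y} :=
      fun y => ⟨(s : ZMod n') * (y.1 + (t : ZMod n')), hσH y⟩ with hςf
    have hςinj : Function.Injective ςf := by
      intro a b hab
      have h1 : (s : ZMod n') * (a.1 + (t : ZMod n')) = (s : ZMod n') * (b.1 + (t : ZMod n')) :=
        congrArg Subtype.val hab
      exact Subtype.ext (hσbij.injective h1)
    have hςbij : Function.Bijective ςf := Finite.injective_iff_bijective.mp hςinj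
    have hcardH : Odd (Fintype.card {y : ZMod n' // ((q : ℕ) : ZMod n') * y = y}) := by
      let Hsub : AddSubgroup (ZMod n') :=
        { carrier := {y : ZMod n' | ((q : ℕ) : ZMod n') * y = y}
          zero_mem' := by simp
          add_mem' := by
            intro a b ha hb
            simp only [Set.mem_setOf_eq] at ha hb ⊢
            rw [mul_add, ha, hb]
          neg_mem' := by
            intro a ha
            simp only [Set.mem_setOf_eq] at ha ⊢
            rw [mul_neg, ha] }
      have hdvd : Nat.card Hsub ∣ Nat.card (ZMod n') :=
        AddSubgroup.card_addSubgroup_dvd_card Hsub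
      rw [Nat.card_zmod] at hdvd
      have hcards : Nat.card Hsub
          = Fintype.card {y : ZMod n' // ((q : ℕ) : ZMod n') * y = y} :=
        (Nat.card_congr ((Equiv.subtypeEquivRight fun y => Iff.rfl) :
          ↥Hsub ≃ {y : ZMod n' // ((q : ℕ) : ZMod n') * y = y})).trans
          Nat.card_eq_fintype_card
      rw [hcards] at hdvd
      rcases Nat.even_or_odd (Fintype.card {y : ZMod n' // ((q : ℕ) : ZMod n') * y = y}) with
        he | ho
      · exfalso
        have h2 := he.two_dvd.trans hdvd
        rw [Nat.odd_iff] at hn'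
        omega
      · exact ho
    obtain ⟨y₀, m', hm', hy₀⟩ := exists_odd_period hcardH hςbij
    have hcoe : ∀ (j : ℕ) (y : {y : ZMod n' // ((q : ℕ) : ZMod n') * y = y}),
        (ςf^[j] y).1 = (fun z : ZMod n' => (s : ZMod n') * (z + (t : ZMod n')))^[j] y.1 := by
      intro j
      induction j with
      | zero => intro y; rfl
      | succ j ih =>
          intro y
          rw [Function.iterate_succ_apply', Function.iterate_succ_apply', ← ih]
    have hσy : (fun z : ZMod n' => (s : ZMod n') * (z + (t : ZMod n')))^[m'] y₀.1 = y₀.1 := by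
      rw [← hcoe m' y₀, hy₀]
    have hqy : ∀ a : ℕ, ((q : ℕ) : ZMod n') ^ a * y₀.1 = y₀.1 := by
      intro a
      induction a with
      | zero => rw [pow_zero, one_mul]
      | succ a ih => rw [pow_succ, mul_assoc, y₀.2, ih]
    -- iterate the 2^v cycle
    have hqt2p : ∀ a : ℕ, ((q : ℕ) : ZMod (2 ^ v)) ^ a * (t : ZMod (2 ^ v)) = (t : ZMod (2 ^ v)) := by
      intro a
      induction a with
      | zero => rw [pow_zero, one_mul]
      | succ a ih => rw [pow_succ, mul_assoc, ht2, ih]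
    have hc2p : ∀ (a : ℕ) (z : ZMod (2 ^ v)),
        (s : ZMod (2 ^ v)) * (((q : ℕ) : ZMod (2 ^ v)) ^ a * z + (t : ZMod (2 ^ v)))
        = ((q : ℕ) : ZMod (2 ^ v)) ^ a * ((s : ZMod (2 ^ v)) * (z + (t : ZMod (2 ^ v)))) := by
      intro a z
      conv_lhs => rw [← hqt2p a]
      ring
    have hc2pi : ∀ (k a : ℕ) (z : ZMod (2 ^ v)),
        (fun i : ZMod (2 ^ v) => (s : ZMod (2 ^ v)) * (i + (t : ZMod (2 ^ v))))^[k]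
          (((q : ℕ) : ZMod (2 ^ v)) ^ a * z)
        = ((q : ℕ) : ZMod (2 ^ v)) ^ a
          * ((fun i : ZMod (2 ^ v) => (s : ZMod (2 ^ v)) * (i + (t : ZMod (2 ^ v))))^[k] z) := by
      intro k a
      induction k with
      | zero => intro z; simp
      | succ k ih =>
          intro z
          rw [Function.iterate_succ_apply', Function.iterate_succ_apply', ih]
          exact hc2p a _
    have hiter : ∀ b : ℕ,
        (fun i : ZMod (2 ^ v) => (s : ZMod (2 ^ v)) * (i + (t : ZMod (2 ^ v))))^[m * b] x₀
        = ((q : ℕ) : ZMod (2 ^ v)) ^ (i * b) * x₀ := by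
      intro b
      induction b with
      | zero => simp
      | succ b ih =>
          have e1 : m * (b + 1) = m * b + m := by ring
          have e2 : i + i * b = i * (b + 1) := by ring
          rw [e1, Function.iterate_add_apply, hx', hc2pi, ih, ← mul_assoc, ← pow_add, e2]
    have hσiter : (fun z : ZMod n' => (s : ZMod n') * (z + (t : ZMod n')))^[m * m'] y₀.1
        = y₀.1 := by
      rw [mul_comm m m', Function.iterate_mul]
      exact Function.iterate_fixed hσy m
    -- CRT assembly
    have hco : Nat.Coprime (2 ^ v) n' := Nat.Coprime.pow_left v (Nat.coprime_two_left.mpr hn')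
    set e := ZMod.chineseRemainder hco with he
    set x : ZMod (2 ^ v * n') := e.symm (x₀, y₀.1) with hxdef
    have hex : e x = (x₀, y₀.1) := e.apply_symm_apply _
    have heF : ∀ z : ZMod (2 ^ v * n'),
        e ((fun i : ZMod (2 ^ v * n') =>
            (s : ZMod (2 ^ v * n')) * (i + (t : ZMod (2 ^ v * n')))) z)
        = ((fun i : ZMod (2 ^ v) => (s : ZMod (2 ^ v)) * (i + (t : ZMod (2 ^ v)))) (e z).1,
           (fun z' : ZMod n' => (s : ZMod n') * (z' + (t : ZMod n'))) (e z).2) := by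
      intro z
      show e ((s : ZMod (2 ^ v * n')) * (z + (t : ZMod (2 ^ v * n')))) = _
      have h1 : e ((s : ZMod (2 ^ v * n')) * (z + (t : ZMod (2 ^ v * n'))))
          = ((s : ℤ) : ZMod (2 ^ v) × ZMod n') * (e z + ((t : ℤ) : ZMod (2 ^ v) × ZMod n')) := by
        rw [map_mul, map_add, map_intCast, map_intCast]
      rw [h1]
      refine Prod.ext ?_ ?_
      · simp [Prod.fst_mul, Prod.fst_add, Prod.fst_intCast]
      · simp [Prod.snd_mul, Prod.snd_add, Prod.snd_intCast]
    have hiterfull : ∀ (k : ℕ) (z : ZMod (2 ^ v * n')),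
        e ((fun i : ZMod (2 ^ v * n') =>
            (s : ZMod (2 ^ v * n')) * (i + (t : ZMod (2 ^ v * n'))))^[k] z)
        = ((fun i : ZMod (2 ^ v) => (s : ZMod (2 ^ v)) * (i + (t : ZMod (2 ^ v))))^[k] (e z).1,
           (fun z' : ZMod n' => (s : ZMod n') * (z' + (t : ZMod n')))^[k] (e z).2) := by
      intro k
      induction k with
      | zero => intro z; simp
      | succ k ih =>
          intro z
          rw [Function.iterate_succ_apply', heF, ih]
          rw [Function.iterate_succ_apply', Function.iterate_succ_apply']
    have hqpow : e (((q : ℕ) : ZMod (2 ^ v * n')) ^ (i * m') * x)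
        = (((q : ℕ) : ZMod (2 ^ v)) ^ (i * m') * x₀, ((q : ℕ) : ZMod n') ^ (i * m') * y₀.1) := by
      rw [map_mul, map_pow, map_natCast, hex]
      refine Prod.ext ?_ ?_
      · simp [Prod.fst_mul, Prod.pow_fst, Prod.fst_natCast]
      · simp [Prod.snd_mul, Prod.pow_snd, Prod.snd_natCast]
    have hmain : (fun i : ZMod (2 ^ v * n') =>
          (s : ZMod (2 ^ v * n')) * (i + (t : ZMod (2 ^ v * n'))))^[m * m'] x
        = ((q : ℕ) : ZMod (2 ^ v * n')) ^ (i * m') * x := by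
      apply e.injective
      rw [hiterfull, hex, hqpow]
      refine Prod.ext ?_ ?_
      · show (fun i : ZMod (2 ^ v) =>
            (s : ZMod (2 ^ v)) * (i + (t : ZMod (2 ^ v))))^[m * m'] x₀
          = ((q : ℕ) : ZMod (2 ^ v)) ^ (i * m') * x₀
        exact hiter m'
      · show (fun z' : ZMod n' => (s : ZMod n') * (z' + (t : ZMod n')))^[m * m'] y₀.1
          = ((q : ℕ) : ZMod n') ^ (i * m') * y₀.1
        rw [hσiter, hqy]
    refine hnon ⟨x, m * m', i * m', hm.mul hm', ?_⟩
    rw [hmain]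
    exact (congrFun (mul_left_iterate ((q : ℕ) : ZMod (2 ^ v * n')) (i * m')) x).symm

  · -- no odd cycle mod 2^v → no odd cycle mod n : project down
    intro hno2
    rintro ⟨x, m, i, hm, hx⟩
    refine hno2 ⟨ZMod.castHom (dvd_mul_right (2 ^ v) n') (ZMod (2 ^ v)) x, m, i, hm, ?_⟩
    rw [← iter_affine_map (ZMod.castHom (dvd_mul_right (2 ^ v) n') (ZMod (2 ^ v))) s t m x, hx,
      iter_mul_map (ZMod.castHom (dvd_mul_right (2 ^ v) n') (ZMod (2 ^ v))) q i x]
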